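/- For any non-decreasing Boolean function f : {0,1}^n → {0,1} with P(f=1) > 0, E(S_n | f = 1) = (1/p)·E(|P(f)| | f = 1), where S_n = Σ_i X_i with X_i(ω) = ω(i)/p − (1−ω(i))/(1−p). -/

import Mathlib

open Finset Real

/-- The Bernoulli(p) product weight of a configuration `ω ∈ {0,1}^n`. -/
def W (n : ℕ) (p : ℝ) (ω : Fin n → Bool) : ℝ :=
  ∏ i, if ω i then p else 1 - p

/-- Expectation of `g` under the Bernoulli(p) product measure on `{0,1}^n`. -/
def Ex (n : ℕ) (p : ℝ) (g : (Fin n → Bool) → ℝ) : ℝ :=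
  ∑ ω : Fin n → Bool, g ω * W n p ω

/-- `ω` with its `i`-th coordinate set to `1`. -/
def up1 {n : ℕ} (ω : Fin n → Bool) (i : Fin n) : Fin n → Bool :=
  Function.update ω i true

/-- `ω` with its `i`-th coordinate set to `0`. -/
def up0 {n : ℕ} (ω : Fin n → Bool) (i : Fin n) : Fin n → Bool :=
  Function.update ω i false

/-- The random variable `X i (ω) = ω(i)/p − (1−ω(i))/(1−p)`. -/
noncomputable def X (n : ℕ) (p : ℝ) (i : Fin n) (ω : Fin n → Bool) : ℝ :=
  (if ω i then (1:ℝ) else 0) / p - (1 - if ω i then (1:ℝ) else 0) / (1 - p)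

/-- `S_n = X_1 + ⋯ + X_n`. -/
noncomputable def Sn (n : ℕ) (p : ℝ) (ω : Fin n → Bool) : ℝ :=
  ∑ i, X n p i ω

/-- The set of pivotal coordinates of `f` at `ω`. -/
def pivSet {n : ℕ} (f : (Fin n → Bool) → Bool) (ω : Fin n → Bool) : Finset (Fin n) :=
  Finset.univ.filter fun i => f (up1 ω i) ≠ f (up0 ω i)

/-- The real value of a Boolean function. -/
def fval {n : ℕ} (f : (Fin n → Bool) → Bool) (ω : Fin n → Bool) : ℝ :=
  if f ω then 1 else 0

/-- Probability of an event under the Bernoulli(p) product measure. -/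
def Pr (n : ℕ) (p : ℝ) (A : (Fin n → Bool) → Prop) [DecidablePred A] : ℝ :=
  ∑ ω ∈ Finset.univ.filter A, W n p ω

/-- `f` is non-decreasing. -/
def Mono {n : ℕ} (f : (Fin n → Bool) → Bool) : Prop :=
  ∀ (ω : Fin n → Bool) (i : Fin n), f (up0 ω i) ≤ f (up1 ω i)

/-!
Conditioning on the `i`-th coordinate, `E[X_i g] = E[g(ω^i) - g(ω_i)]`: the weights `p` and `1 - p`
cancel the factors `1/p` and `1/(1-p)` in `X_i`. For monotone `f`, `f(ω^i) - f(ω_i)` is the indicator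
that `i` is pivotal; that event does not depend on `ω(i)`, and on it `f = ω(i)`, so
`E[1{i pivotal} f] = p P(i pivotal)`. Hence `E[X_i f] = (1/p) E[1{i pivotal} f]`, and summing over `i`
gives `E[S_n f] = (1/p) E[|P(f)| f]`; dividing by `P(f = 1)` gives the conditional form.
-/

section Coordinate

variable {n : ℕ} (i : Fin n)

lemma up1_up1 (ω : Fin n → Bool) : up1 (up1 ω i) i = up1 ω i :=
  Function.update_idem _ _ _

lemma up1_up0 (ω : Fin n → Bool) : up1 (up0 ω i) i = up1 ω i :=
  Function.update_idem _ _ _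

lemma up0_up1 (ω : Fin n → Bool) : up0 (up1 ω i) i = up0 ω i :=
  Function.update_idem _ _ _

lemma up0_up0 (ω : Fin n → Bool) : up0 (up0 ω i) i = up0 ω i :=
  Function.update_idem _ _ _

lemma up1_eq_self {ω : Fin n → Bool} (h : ω i = true) : up1 ω i = ω := by
  rw [up1, ← h, Function.update_eq_self]

lemma up0_eq_self {ω : Fin n → Bool} (h : ω i = false) : up0 ω i = ω := by
  rw [up0, ← h, Function.update_eq_self]

/-- Pairing `ω` with `ω` flipped at `i` turns the pair into `{up1 ω i, up0 ω i}`. -/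
lemma two_nsmul_sum_eq_sum_up1_add_up0 {M : Type*} [AddCommMonoid M] (F : (Fin n → Bool) → M) :
    2 • ∑ ω, F ω = ∑ ω, (F (up1 ω i) + F (up0 ω i)) := by
  let flip : Equiv.Perm (Fin n → Bool) :=
    Function.Involutive.toPerm (fun ω => Function.update ω i (!ω i)) fun ω => by simp
  calc 2 • ∑ ω, F ω = ∑ ω, (F ω + F (flip ω)) := by
        rw [two_nsmul, sum_add_distrib, Equiv.sum_comp flip F]
    _ = ∑ ω, (F (up1 ω i) + F (up0 ω i)) := by
        refine sum_congr rfl fun ω _ => ?_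
        show F ω + F (Function.update ω i (!ω i)) = _
        cases h : ω i
        · rw [add_comm, up0_eq_self i h]
          rfl
        · rw [up1_eq_self i h]
          rfl

lemma W_update (p : ℝ) (ω : Fin n → Bool) (b : Bool) :
    W n p (Function.update ω i b) =
      (if b then p else 1 - p) * ∏ j ∈ univ.erase i, (if ω j then p else 1 - p) := by
  rw [W, ← mul_prod_erase univ _ (mem_univ i), Function.update_self]
  congr 1
  exact prod_congr rfl fun j hj => by rw [Function.update_of_ne (ne_of_mem_erase hj)]

lemma Ex_eq_Ex_up1_up0 (p : ℝ) (g : (Fin n → Bool) → ℝ) :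
    Ex n p g = Ex n p (fun ω => p * g (up1 ω i) + (1 - p) * g (up0 ω i)) := by
  have hg := two_nsmul_sum_eq_sum_up1_add_up0 i (fun ω => g ω * W n p ω)
  have hcond := two_nsmul_sum_eq_sum_up1_add_up0 i
    (fun ω => (p * g (up1 ω i) + (1 - p) * g (up0 ω i)) * W n p ω)
  simp only [up1_up1, up1_up0, up0_up1, up0_up0, two_nsmul] at hg hcond
  have hpair : ∀ ω, g (up1 ω i) * W n p (up1 ω i) + g (up0 ω i) * W n p (up0 ω i) =
      (p * g (up1 ω i) + (1 - p) * g (up0 ω i)) * W n p (up1 ω i) +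
        (p * g (up1 ω i) + (1 - p) * g (up0 ω i)) * W n p (up0 ω i) := by
    intro ω
    simp only [up1, up0, W_update, ↓reduceIte, Bool.false_eq_true]
    ring
  simp only [Ex]
  linarith [sum_congr rfl fun ω (_ : ω ∈ univ) => hpair ω]

/-- Discrete integration by parts: `X i` acts as the derivative in the `i`-th coordinate. -/
lemma Ex_X_mul {p : ℝ} (hp0 : 0 < p) (hp1 : p < 1) (g : (Fin n → Bool) → ℝ) :
    Ex n p (fun ω => X n p i ω * g ω) = Ex n p (fun ω => g (up1 ω i) - g (up0 ω i)) := by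
  rw [Ex_eq_Ex_up1_up0 i]
  congr 1
  funext ω
  have hq : 1 - p ≠ 0 := by linarith
  simp only [X, up1, up0, Function.update_self, if_true, Bool.false_eq_true, if_false]
  field_simp
  ring

lemma mem_pivSet_up1_iff (f : (Fin n → Bool) → Bool) (ω : Fin n → Bool) :
    i ∈ pivSet f (up1 ω i) ↔ i ∈ pivSet f ω := by
  simp only [pivSet, mem_filter, mem_univ, true_and, up1_up1, up0_up1]

lemma mem_pivSet_up0_iff (f : (Fin n → Bool) → Bool) (ω : Fin n → Bool) :
    i ∈ pivSet f (up0 ω i) ↔ i ∈ pivSet f ω := by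
  simp only [pivSet, mem_filter, mem_univ, true_and, up1_up0, up0_up0]

variable {f : (Fin n → Bool) → Bool}

lemma apply_up1_up0_of_mem_pivSet (hf : Mono f) {ω : Fin n → Bool} (h : i ∈ pivSet f ω) :
    f (up1 ω i) = true ∧ f (up0 ω i) = false := by
  have hle := hf ω i
  have hne : f (up1 ω i) ≠ f (up0 ω i) := (mem_filter.1 h).2
  revert hle hne
  generalize f (up1 ω i) = a
  generalize f (up0 ω i) = b
  revert a b
  decide

lemma fval_up1_sub_fval_up0_of_mono (hf : Mono f) (ω : Fin n → Bool) :
    fval f (up1 ω i) - fval f (up0 ω i) = if i ∈ pivSet f ω then 1 else 0 := by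
  split_ifs with h
  · simp [fval, apply_up1_up0_of_mem_pivSet i hf h]
  · have heq : f (up1 ω i) = f (up0 ω i) := by simpa [pivSet] using h
    simp [fval, heq]

/-- On the event that `i` is pivotal, a monotone `f` equals the `i`-th coordinate. -/
lemma Ex_piv_mul_fval_of_mono (hf : Mono f) (p : ℝ) :
    Ex n p (fun ω => (if i ∈ pivSet f ω then 1 else 0) * fval f ω) =
      p * Ex n p (fun ω => if i ∈ pivSet f ω then 1 else 0) := by
  rw [Ex_eq_Ex_up1_up0 i, Ex, Ex, mul_sum]
  refine sum_congr rfl fun ω _ => ?_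
  simp only [mem_pivSet_up1_iff, mem_pivSet_up0_iff]
  split_ifs with h
  · simp [fval, apply_up1_up0_of_mem_pivSet i hf h]
  · ring

end Coordinate

lemma Ex_sum {n : ℕ} (p : ℝ) (g : Fin n → (Fin n → Bool) → ℝ) :
    Ex n p (fun ω => ∑ i, g i ω) = ∑ i, Ex n p (g i) := by
  simp only [Ex, sum_mul]
  exact sum_comm

lemma Ex_X_mul_fval_of_mono {n : ℕ} {p : ℝ} (hp0 : 0 < p) (hp1 : p < 1)
    {f : (Fin n → Bool) → Bool} (hf : Mono f) (i : Fin n) :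
    Ex n p (fun ω => X n p i ω * fval f ω) =
      1 / p * Ex n p (fun ω => (if i ∈ pivSet f ω then 1 else 0) * fval f ω) := by
  rw [Ex_X_mul i hp0 hp1, Ex_piv_mul_fval_of_mono i hf, ← mul_assoc,
    one_div_mul_cancel hp0.ne', one_mul]
  simp only [fval_up1_sub_fval_up0_of_mono i hf]

theorem stmt11_general (n : ℕ) (p : ℝ) (hp0 : 0 < p) (hp1 : p < 1)
    (f : (Fin n → Bool) → Bool) (hf : Mono f) :
    Ex n p (fun ω => Sn n p ω * fval f ω) / Pr n p (fun ω => f ω = true) =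
      (1 / p) *
        (Ex n p (fun ω => ((pivSet f ω).card : ℝ) * fval f ω) /
          Pr n p (fun ω => f ω = true)) := by
  have hcard : ∀ ω, ((pivSet f ω).card : ℝ) = ∑ i, if i ∈ pivSet f ω then 1 else 0 := by
    intro ω
    rw [sum_boole, filter_mem_eq_inter, univ_inter]
  simp only [Sn, hcard, sum_mul]
  rw [Ex_sum, Ex_sum, ← mul_div_assoc, mul_sum]
  simp only [Ex_X_mul_fval_of_mono hp0 hp1 hf]

theorem stmt11 (n : ℕ) (p : ℝ) (hp0 : 0 < p) (hp1 : p < 1)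
    (f : (Fin n → Bool) → Bool) (hf : Mono f)
    (hpos : 0 < Pr n p (fun ω => f ω = true)) :
    Ex n p (fun ω => Sn n p ω * fval f ω) / Pr n p (fun ω => f ω = true) =
      (1 / p) *
        (Ex n p (fun ω => ((pivSet f ω).card : ℝ) * fval f ω) /
          Pr n p (fun ω => f ω = true)) :=
  stmt11_general n p hp0 hp1 f hf
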